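/- arXiv:1406.5313 — 6 statements merged into one kernel-verified Lean document; each statement's English description precedes it below -/
import Mathlib

section
/- Every ℛ-stable probability measure is 𝒥-separated. Precisely: if μ is a probability mass function on X such that for every x ∈ X, Σ_{I∈𝒥} Σ_{y_I} ( φ_I(y_I, x_I) μ_I(x_I) μ(x_{Λ∖I}, y_I) − φ_I(x_I, y_I) μ_I(y_I) μ(x) ) = 0, then for every frame I ∈ 𝒥 and every x ∈ X one has μ(x) = μ_I(x_I)·μ_{Λ∖I}(x_{Λ∖I}). (No T₀ assumption on 𝒥 is needed.) -/
/-!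
An H-theorem. Write `x'` for `x` with its `I`-part replaced by that of `v`, and `v'` for `v` with
its `I`-part replaced by that of `x`; `(x, v) ↦ (x', v')` is an involution. Pairing the
stationarity equation with `log μ` and symmetrising over this involution and over `x ↔ v` writes
`0` as the sum over frames `I` and pairs `(x, v)` of
`φ_I(x_I, v_I) (μ x μ v - μ x' μ v') (log (μ x' μ v') - log (μ x μ v))`,
whose terms are `≤ 0` by monotonicity of `log`. So every term vanishes, which is the detailed
balance `μ x μ v = μ x' μ v'`; summing it over `v` factorises `μ x` into its `I`- and
`Iᶜ`-marginals. Since `Real.log 0 = 0`, the sign argument also needs the support of `μ` to be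
closed under `(x, v) ↦ x'`: at a word of mass zero only gain terms survive in the recombination
equation, and the one that recombines `x'` back into `x` is positive.
-/

open Finset

/-- Restriction of a word to a set of coordinates `M`. -/
def restrictW {Λ : Type*} (K : Λ → Type*) (M : Finset Λ) (x : ∀ i, K i) :
    ∀ i : M, K i := fun i => x i

/-- Marginal of `μ` on the set of coordinates `M`. -/
def marginal {Λ : Type*} [Fintype Λ] [DecidableEq Λ] (K : Λ → Type*)
    [∀ i, Fintype (K i)] [∀ i, DecidableEq (K i)]
    (μ : (∀ i, K i) → ℝ) (M : Finset Λ) (a : ∀ i : M, K i) : ℝ :=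
  ∑ x : ∀ i, K i, if restrictW K M x = a then μ x else 0

/-- One-dimensional marginal of `μ` at coordinate `i`. -/
def marg1 {Λ : Type*} [Fintype Λ] [DecidableEq Λ] (K : Λ → Type*)
    [∀ i, Fintype (K i)] [∀ i, DecidableEq (K i)]
    (μ : (∀ i, K i) → ℝ) (i : Λ) (a : K i) : ℝ :=
  ∑ x : ∀ i, K i, if x i = a then μ x else 0

/-- `I`-recombination: the word equal to `a` on `I` and to `x` off `I`. -/
def recombW {Λ : Type*} [DecidableEq Λ] (K : Λ → Type*) (I : Finset Λ)
    (x : ∀ i, K i) (a : ∀ i : I, K i) : ∀ i, K i :=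
  fun i => if h : i ∈ I then a ⟨i, h⟩ else x i

/-- Right hand side of the recombination equation. -/
def recombRHS {Λ : Type*} [Fintype Λ] [DecidableEq Λ] (K : Λ → Type*)
    [∀ i, Fintype (K i)] [∀ i, DecidableEq (K i)]
    (𝒥 : Finset (Finset Λ))
    (φ : ∀ I : Finset Λ, (∀ i : I, K i) → (∀ i : I, K i) → ℝ)
    (μ : (∀ i, K i) → ℝ) (x : ∀ i, K i) : ℝ :=
  ∑ I ∈ 𝒥, ∑ y : ∀ i : I, K i,
    (φ I y (restrictW K I x) * marginal K μ I (restrictW K I x) * μ (recombW K I x y)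
      - φ I (restrictW K I x) y * marginal K μ I y * μ x)

/-- A probability mass function on `∀ i, K i`. -/
def IsPMF {Λ : Type*} [Fintype Λ] [DecidableEq Λ] (K : Λ → Type*) [∀ i, Fintype (K i)]
    (μ : (∀ i, K i) → ℝ) : Prop :=
  (∀ x, 0 ≤ μ x) ∧ ∑ x : ∀ i, K i, μ x = 1

/-- `𝒥`-separated measure. -/
def IsSeparated {Λ : Type*} [Fintype Λ] [DecidableEq Λ] (K : Λ → Type*)
    [∀ i, Fintype (K i)] [∀ i, DecidableEq (K i)]
    (𝒥 : Finset (Finset Λ)) (μ : (∀ i, K i) → ℝ) : Prop :=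
  ∀ I ∈ 𝒥, ∀ x, μ x = marginal K μ I (restrictW K I x) * marginal K μ Iᶜ (restrictW K Iᶜ x)

/-- A `T₀`-system of frames. -/
def IsT0 {Λ : Type*} (𝒥 : Finset (Finset Λ)) : Prop :=
  ∀ i j : Λ, i ≠ j → ∃ I ∈ 𝒥, (i ∈ I ∧ j ∉ I) ∨ (j ∈ I ∧ i ∉ I)

section Grafting

variable {Λ : Type*} [DecidableEq Λ]

def graft (K : Λ → Type*) (I : Finset Λ) (x v : ∀ i, K i) : ∀ i, K i :=
  recombW K I x (restrictW K I v)

variable {K : Λ → Type*}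

@[simp]
lemma restrictW_recombW (I : Finset Λ) (x : ∀ i, K i) (a : ∀ i : I, K i) :
    restrictW K I (recombW K I x a) = a := by
  funext i
  simp [restrictW, recombW, i.2]

@[simp]
lemma recombW_recombW (I : Finset Λ) (x : ∀ i, K i) (a b : ∀ i : I, K i) :
    recombW K I (recombW K I x a) b = recombW K I x b := by
  funext i
  by_cases h : i ∈ I <;> simp [recombW, h]

@[simp]
lemma recombW_restrictW_self (I : Finset Λ) (x : ∀ i, K i) :
    recombW K I x (restrictW K I x) = x := by
  funext i
  by_cases h : i ∈ I <;> simp [recombW, restrictW, h]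

@[simp]
lemma restrictW_graft (I : Finset Λ) (x v : ∀ i, K i) :
    restrictW K I (graft K I x v) = restrictW K I v :=
  restrictW_recombW I x _

@[simp]
lemma graft_graft_graft (I : Finset Λ) (x v : ∀ i, K i) :
    graft K I (graft K I x v) (graft K I v x) = x := by
  simp [graft]

variable [Fintype Λ]

lemma restrictW_compl_recombW (I : Finset Λ) (x : ∀ i, K i) (a : ∀ i : I, K i) :
    restrictW K Iᶜ (recombW K I x a) = restrictW K Iᶜ x := by
  funext i
  simp [restrictW, recombW, Finset.mem_compl.mp i.2]

lemma recombW_restrictW_of_restrictW_compl_eq {I : Finset Λ} {x z : ∀ i, K i}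
    (h : restrictW K Iᶜ x = restrictW K Iᶜ z) : recombW K I x (restrictW K I z) = z := by
  funext i
  by_cases hi : i ∈ I
  · simp [recombW, restrictW, hi]
  · simpa [recombW, restrictW, hi] using congrFun h ⟨i, Finset.mem_compl.mpr hi⟩

variable [∀ i, Fintype (K i)]

lemma sum_sum_recombW_restrictW {M : Type*} [AddCommMonoid M] (I : Finset Λ)
    (g : (∀ i, K i) → (∀ i : I, K i) → M) :
    ∑ x, ∑ y, g (recombW K I x y) (restrictW K I x) = ∑ x, ∑ y, g x y := by
  have hσ : Function.Involutive
      fun p : (∀ i, K i) × (∀ i : I, K i) => (recombW K I p.1 p.2, restrictW K I p.1) :=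
    fun p => by simp
  rw [← Fintype.sum_prod_type', ← Fintype.sum_prod_type']
  exact Equiv.sum_comp hσ.toPerm fun p => g p.1 p.2

lemma sum_sum_graft {M : Type*} [AddCommMonoid M] (I : Finset Λ)
    (g : (∀ i, K i) → (∀ i, K i) → M) :
    ∑ x, ∑ v, g (graft K I x v) (graft K I v x) = ∑ x, ∑ v, g x v := by
  have hσ : Function.Involutive
      fun p : (∀ i, K i) × (∀ i, K i) => (graft K I p.1 p.2, graft K I p.2 p.1) :=
    fun p => by simp
  rw [← Fintype.sum_prod_type', ← Fintype.sum_prod_type']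
  exact Equiv.sum_comp hσ.toPerm fun p => g p.1 p.2

variable [∀ i, DecidableEq (K i)]

lemma sum_mul_graft (I : Finset Λ) (x : ∀ i, K i) (f g : (∀ i, K i) → ℝ) :
    ∑ v, f (graft K I x v) * g (graft K I v x) =
      (∑ z with restrictW K Iᶜ z = restrictW K Iᶜ x, f z) *
        ∑ w with restrictW K I w = restrictW K I x, g w := by
  rw [Finset.sum_mul_sum, ← Finset.sum_product']
  refine Finset.sum_nbij' (fun v => (graft K I x v, graft K I v x)) (fun p => graft K I p.2 p.1)
    ?_ (by simp) (by simp) ?_ (by simp)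
  · intro v _
    simp [graft, restrictW_compl_recombW]
  · rintro ⟨z, w⟩ h
    simp only [Finset.mem_product, Finset.mem_filter, Finset.mem_univ, true_and] at h
    simp only [graft, restrictW_recombW, recombW_recombW, ← h.2, recombW_restrictW_self,
      Prod.mk.injEq, and_true]
    exact recombW_restrictW_of_restrictW_compl_eq h.1.symm

end Grafting

section Marginal

variable {Λ : Type*} [Fintype Λ] [DecidableEq Λ] {K : Λ → Type*}
  [∀ i, Fintype (K i)] [∀ i, DecidableEq (K i)] (μ : (∀ i, K i) → ℝ)

lemma marginal_eq_sum_filter (M : Finset Λ) (a : ∀ i : M, K i) :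
    marginal K μ M a = ∑ x with restrictW K M x = a, μ x :=
  (Finset.sum_filter _ _).symm

lemma sum_marginal_mul (I : Finset Λ) (g : (∀ i : I, K i) → ℝ) :
    ∑ y, marginal K μ I y * g y = ∑ v, μ v * g (restrictW K I v) := by
  simp only [marginal, Finset.sum_mul, ite_mul, zero_mul]
  rw [Finset.sum_comm]
  simp

variable {μ}

lemma marginal_nonneg (hμ : ∀ x, 0 ≤ μ x) (M : Finset Λ) (a : ∀ i : M, K i) :
    0 ≤ marginal K μ M a := by
  rw [marginal_eq_sum_filter]
  exact Finset.sum_nonneg fun x _ => hμ x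

lemma le_marginal_restrictW (hμ : ∀ x, 0 ≤ μ x) (M : Finset Λ) (v : ∀ i, K i) :
    μ v ≤ marginal K μ M (restrictW K M v) := by
  rw [marginal_eq_sum_filter]
  exact Finset.single_le_sum (fun x _ => hμ x) (by simp)

end Marginal

section Stationarity

variable {Λ : Type*} [Fintype Λ] [DecidableEq Λ] {K : Λ → Type*}
  [∀ i, Fintype (K i)] [∀ i, DecidableEq (K i)] {𝒥 : Finset (Finset Λ)}
  {φ : ∀ I : Finset Λ, (∀ i : I, K i) → (∀ i : I, K i) → ℝ} {μ : (∀ i, K i) → ℝ}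

lemma sum_mul_recombRHS (f : (∀ i, K i) → ℝ) :
    ∑ x, f x * recombRHS K 𝒥 φ μ x =
      ∑ I ∈ 𝒥, ∑ x, ∑ v, φ I (restrictW K I x) (restrictW K I v) * (μ x * μ v) *
        (f (graft K I x v) - f x) := by
  simp only [recombRHS, Finset.mul_sum]
  rw [Finset.sum_comm]
  refine Finset.sum_congr rfl fun I _ => ?_
  have gain : ∑ x, ∑ y, f x *
      (φ I y (restrictW K I x) * marginal K μ I (restrictW K I x) * μ (recombW K I x y)) =
        ∑ x, ∑ v, φ I (restrictW K I x) (restrictW K I v) * (μ x * μ v) * f (graft K I x v) := by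
    rw [← sum_sum_recombW_restrictW I]
    refine Finset.sum_congr rfl fun x _ => ?_
    simp only [restrictW_recombW, recombW_recombW, recombW_restrictW_self]
    calc _ = ∑ y, marginal K μ I y * (φ I (restrictW K I x) y * μ x * f (recombW K I x y)) :=
          Finset.sum_congr rfl fun y _ => by ring
      _ = _ := by
          rw [sum_marginal_mul]
          exact Finset.sum_congr rfl fun v _ => by rw [graft]; ring
  have loss : ∑ x, ∑ y, f x * (φ I (restrictW K I x) y * marginal K μ I y * μ x) =
      ∑ x, ∑ v, φ I (restrictW K I x) (restrictW K I v) * (μ x * μ v) * f x := by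
    refine Finset.sum_congr rfl fun x _ => ?_
    calc _ = ∑ y, marginal K μ I y * (φ I (restrictW K I x) y * μ x * f x) :=
          Finset.sum_congr rfl fun y _ => by ring
      _ = _ := by
          rw [sum_marginal_mul]
          exact Finset.sum_congr rfl fun v _ => by ring
  simp only [mul_sub, Finset.sum_sub_distrib, gain, loss]

lemma four_mul_sum_mul_recombRHS (hφsymm : ∀ I ∈ 𝒥, ∀ a b, φ I a b = φ I b a)
    (f : (∀ i, K i) → ℝ) :
    4 * ∑ x, f x * recombRHS K 𝒥 φ μ x =
      ∑ I ∈ 𝒥, ∑ x, ∑ v, φ I (restrictW K I x) (restrictW K I v) *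
        ((μ x * μ v - μ (graft K I x v) * μ (graft K I v x)) *
          (f (graft K I x v) + f (graft K I v x) - (f x + f v))) := by
  rw [sum_mul_recombRHS, Finset.mul_sum]
  refine Finset.sum_congr rfl fun I hI => ?_
  set t := fun x v => φ I (restrictW K I x) (restrictW K I v) * (μ x * μ v) *
    (f (graft K I x v) - f x)
  have swap : ∑ x, ∑ v, t v x = ∑ x, ∑ v, t x v := Finset.sum_comm
  have flip : ∑ x, ∑ v, t (graft K I x v) (graft K I v x) = ∑ x, ∑ v, t x v :=
    sum_sum_graft I t
  have flip_swap : ∑ x, ∑ v, t (graft K I v x) (graft K I x v) = ∑ x, ∑ v, t x v :=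
    (sum_sum_graft I fun x v => t v x).trans swap
  calc 4 * ∑ x, ∑ v, t x v = ∑ x, ∑ v, (t x v + t v x + t (graft K I x v) (graft K I v x) +
        t (graft K I v x) (graft K I x v)) := by
        simp only [Finset.sum_add_distrib, swap, flip, flip_swap]
        ring
    _ = _ := by
        refine Finset.sum_congr rfl fun x _ => Finset.sum_congr rfl fun v _ => ?_
        simp only [t, restrictW_graft, graft_graft_graft, hφsymm I hI (restrictW K I v)]
        ring

end Stationarity

lemma Real.sub_mul_log_sub_log_neg {p q : ℝ} (hp : 0 < p) (hq : 0 < q) (hpq : p ≠ q) :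
    (p - q) * (Real.log q - Real.log p) < 0 := by
  rcases hpq.lt_or_gt with h | h
  · exact mul_neg_of_neg_of_pos (sub_neg.mpr h) (sub_pos.mpr (Real.log_lt_log hp h))
  · exact mul_neg_of_pos_of_neg (sub_pos.mpr h) (sub_neg.mpr (Real.log_lt_log hq h))

section DetailedBalance

variable {Λ : Type*} [DecidableEq Λ]

noncomputable def entropyProduction (K : Λ → Type*)
    (φ : ∀ I : Finset Λ, (∀ i : I, K i) → (∀ i : I, K i) → ℝ) (μ : (∀ i, K i) → ℝ)
    (I : Finset Λ) (x v : ∀ i, K i) : ℝ :=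
  φ I (restrictW K I x) (restrictW K I v) *
    ((μ x * μ v - μ (graft K I x v) * μ (graft K I v x)) *
      (Real.log (μ (graft K I x v)) + Real.log (μ (graft K I v x)) -
        (Real.log (μ x) + Real.log (μ v))))

variable [Fintype Λ] {K : Λ → Type*}
  [∀ i, Fintype (K i)] [∀ i, DecidableEq (K i)] {𝒥 : Finset (Finset Λ)}
  {φ : ∀ I : Finset Λ, (∀ i : I, K i) → (∀ i : I, K i) → ℝ} {μ : (∀ i, K i) → ℝ}

lemma pos_graft_of_stable (hμ : ∀ x, 0 ≤ μ x) (hφpos : ∀ I ∈ 𝒥, ∀ a b, 0 < φ I a b)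
    (hstable : ∀ x, recombRHS K 𝒥 φ μ x = 0) {I : Finset Λ} (hI : I ∈ 𝒥) {x v : ∀ i, K i}
    (hx : 0 < μ x) (hv : 0 < μ v) : 0 < μ (graft K I x v) := by
  by_contra hneg
  have hzero : μ (graft K I x v) = 0 := le_antisymm (not_lt.mp hneg) (hμ _)
  refine (hstable (graft K I x v)).not_gt ?_
  simp only [recombRHS, hzero, mul_zero, sub_zero]
  refine Finset.sum_pos' (fun J hJ => Finset.sum_nonneg fun y _ => ?_) ⟨I, hI, ?_⟩
  · exact mul_nonneg (mul_nonneg (hφpos J hJ _ _).le (marginal_nonneg hμ J _)) (hμ _)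
  refine Finset.sum_pos' (fun y _ => ?_) ⟨restrictW K I x, Finset.mem_univ _, ?_⟩
  · exact mul_nonneg (mul_nonneg (hφpos I hI _ _).le (marginal_nonneg hμ I _)) (hμ _)
  simp only [graft, restrictW_recombW, recombW_recombW, recombW_restrictW_self]
  exact mul_pos (mul_pos (hφpos I hI _ _) (hv.trans_le (le_marginal_restrictW hμ I v))) hx

lemma sum_entropyProduction_eq_zero (hφsymm : ∀ I ∈ 𝒥, ∀ a b, φ I a b = φ I b a)
    (hstable : ∀ x, recombRHS K 𝒥 φ μ x = 0) :
    ∑ I ∈ 𝒥, ∑ x, ∑ v, entropyProduction K φ μ I x v = 0 := by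
  simp only [entropyProduction]
  rw [← four_mul_sum_mul_recombRHS hφsymm fun x => Real.log (μ x)]
  simp [hstable]

lemma entropyProduction_neg (hμ : ∀ x, 0 ≤ μ x) (hφpos : ∀ I ∈ 𝒥, ∀ a b, 0 < φ I a b)
    (hstable : ∀ x, recombRHS K 𝒥 φ μ x = 0) {I : Finset Λ} (hI : I ∈ 𝒥) {x v : ∀ i, K i}
    (hne : μ x * μ v ≠ μ (graft K I x v) * μ (graft K I v x)) :
    entropyProduction K φ μ I x v < 0 := by
  have pos_mul : ∀ {a b}, 0 < μ a * μ b → 0 < μ (graft K I a b) * μ (graft K I b a) :=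
    fun hab => mul_pos
      (pos_graft_of_stable hμ hφpos hstable hI (pos_of_mul_pos_left hab (hμ _))
        (pos_of_mul_pos_right hab (hμ _)))
      (pos_graft_of_stable hμ hφpos hstable hI (pos_of_mul_pos_right hab (hμ _))
        (pos_of_mul_pos_left hab (hμ _)))
  have hp : 0 < μ x * μ v := by
    rcases (mul_nonneg (hμ x) (hμ v)).lt_or_eq with hp | hp
    · exact hp
    rcases (mul_nonneg (hμ (graft K I x v)) (hμ (graft K I v x))).lt_or_eq with hq | hq
    · simpa using pos_mul hq
    · exact absurd (hp.symm.trans hq) hne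
  have hq := pos_mul hp
  rw [entropyProduction, ← Real.log_mul (left_ne_zero_of_mul hp.ne') (right_ne_zero_of_mul hp.ne'),
    ← Real.log_mul (left_ne_zero_of_mul hq.ne') (right_ne_zero_of_mul hq.ne')]
  exact mul_neg_of_pos_of_neg (hφpos I hI _ _) (Real.sub_mul_log_sub_log_neg hp hq hne)

lemma mul_eq_mul_graft_of_stable (hμ : ∀ x, 0 ≤ μ x) (hφpos : ∀ I ∈ 𝒥, ∀ a b, 0 < φ I a b)
    (hφsymm : ∀ I ∈ 𝒥, ∀ a b, φ I a b = φ I b a) (hstable : ∀ x, recombRHS K 𝒥 φ μ x = 0)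
    {I : Finset Λ} (hI : I ∈ 𝒥) (x v : ∀ i, K i) :
    μ x * μ v = μ (graft K I x v) * μ (graft K I v x) := by
  have nonpos : ∀ J ∈ 𝒥, ∀ y w, entropyProduction K φ μ J y w ≤ 0 := fun J hJ y w => by
    by_cases h : μ y * μ w = μ (graft K J y w) * μ (graft K J w y)
    · simp [entropyProduction, h]
    · exact (entropyProduction_neg hμ hφpos hstable hJ h).le
  by_contra hne
  refine (sum_entropyProduction_eq_zero hφsymm hstable).not_lt <| Finset.sum_neg'
    (fun J hJ => Finset.sum_nonpos fun y _ => Finset.sum_nonpos fun w _ => nonpos J hJ y w)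
    ⟨I, hI, Finset.sum_neg' (fun y _ => Finset.sum_nonpos fun w _ => nonpos I hI y w)
      ⟨x, Finset.mem_univ _, Finset.sum_neg' (fun w _ => nonpos I hI x w)
        ⟨v, Finset.mem_univ _, entropyProduction_neg hμ hφpos hstable hI hne⟩⟩⟩

end DetailedBalance

theorem stable_is_separated_general {Λ : Type*} [Fintype Λ] [DecidableEq Λ]
    (K : Λ → Type*) [∀ i, Fintype (K i)] [∀ i, DecidableEq (K i)]
    (𝒥 : Finset (Finset Λ))
    (φ : ∀ I : Finset Λ, (∀ i : I, K i) → (∀ i : I, K i) → ℝ)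
    (hφpos : ∀ I ∈ 𝒥, ∀ a b, 0 < φ I a b)
    (hφsymm : ∀ I ∈ 𝒥, ∀ a b, φ I a b = φ I b a)
    (μ : (∀ i, K i) → ℝ) (hμ : IsPMF K μ)
    (hstable : ∀ x, recombRHS K 𝒥 φ μ x = 0) :
    IsSeparated K 𝒥 μ := by
  intro I hI x
  calc μ x = ∑ v, μ x * μ v := by rw [← Finset.mul_sum, hμ.2, mul_one]
    _ = ∑ v, μ (graft K I x v) * μ (graft K I v x) :=
      Finset.sum_congr rfl fun v _ => mul_eq_mul_graft_of_stable hμ.1 hφpos hφsymm hstable hI x v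
    _ = _ := by rw [sum_mul_graft, ← marginal_eq_sum_filter, ← marginal_eq_sum_filter, mul_comm]

/-- every `ℛ`-stable probability measure is `𝒥`-separated. -/
theorem stable_is_separated {Λ : Type*} [Fintype Λ] [DecidableEq Λ] [Nonempty Λ]
    (K : Λ → Type*) [∀ i, Fintype (K i)] [∀ i, DecidableEq (K i)] [∀ i, Nonempty (K i)]
    (𝒥 : Finset (Finset Λ))
    (φ : ∀ I : Finset Λ, (∀ i : I, K i) → (∀ i : I, K i) → ℝ)
    (hφpos : ∀ I ∈ 𝒥, ∀ a b, 0 < φ I a b)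
    (hφsymm : ∀ I ∈ 𝒥, ∀ a b, φ I a b = φ I b a)
    (μ : (∀ i, K i) → ℝ) (hμ : IsPMF K μ)
    (hstable : ∀ x, recombRHS K 𝒥 φ μ x = 0) :
    IsSeparated K 𝒥 μ :=
  stable_is_separated_general K 𝒥 φ hφpos hφsymm μ hμ hstable
end

section
/- If 𝒥 is a T₀-system on Λ and ν is a 𝒥-separated probability mass function on X, then ν is the product of its one-dimensional marginals: ν(x) = Π_{i∈Λ} ν_i(x_i) for every x ∈ X. -/
open Finset

/-!
Say that `μ` factorizes along `I` if `μ = P_I · P_Iᶜ`, where `P_S` is the `S`-marginal.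
Summing out coordinates on which only one of the two factors depends shows that such a
factorization descends to every marginal: `P_S = P_(S ∩ J) · P_(S \ J)`. Hence the sets along
which `μ` factorizes are closed under intersection; with complements and `Λ` they form a Boolean
subalgebra of `Finset Λ` containing `𝒥`. In a `T₀`-system, `{i}` is the intersection, over
`j ≠ i`, of a frame or the complement of a frame containing `i` but not `j`, so every singleton
lies in this subalgebra, and peeling off one coordinate at a time gives `μ = ∏ᵢ P_{i}`.
-/

theorem restrictW_eq_iff {Λ : Type*} {K : Λ → Type*} {S : Finset Λ} {x y : ∀ i, K i} :
    restrictW K S x = restrictW K S y ↔ ∀ i ∈ S, x i = y i :=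
  ⟨fun h i hi => congrFun h ⟨i, hi⟩, fun h => funext fun i => h i i.2⟩

theorem IsT0.singleton_mem {Λ : Type*} [Fintype Λ] [DecidableEq Λ] {𝒥 : Finset (Finset Λ)}
    (hT0 : IsT0 𝒥) {L : BooleanSubalgebra (Finset Λ)} (h𝒥 : ∀ I ∈ 𝒥, I ∈ L) (i : Λ) :
    {i} ∈ L := by
  have hseparate : ∀ j, ∃ C ∈ L, i ∈ C ∧ (j ≠ i → j ∉ C) := by
    intro j
    by_cases hji : j = i
    · exact ⟨univ, L.top_mem, mem_univ i, fun h => (h hji).elim⟩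
    · obtain ⟨I, hI, ⟨hiI, hjI⟩ | ⟨hjI, hiI⟩⟩ := hT0 i j (Ne.symm hji)
      · exact ⟨I, h𝒥 I hI, hiI, fun _ => hjI⟩
      · exact ⟨Iᶜ, L.compl_mem (h𝒥 I hI), mem_compl.2 hiI, fun _ => notMem_compl.2 hjI⟩
  choose C hCL hiC hjC using hseparate
  have hinf : univ.inf C = {i} := by
    ext k
    simp only [mem_inf, mem_univ, true_implies, mem_singleton]
    exact ⟨fun hk => by_contra fun hki => hjC k hki (hk k), fun hki j => hki ▸ hiC j⟩
  rw [← hinf]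
  exact inf_induction L.top_mem (fun _ ha _ hb => L.inf_mem ha hb) fun j _ => hCL j

section

variable {Λ : Type*} [Fintype Λ] [DecidableEq Λ] {K : Λ → Type*}
  [∀ i, Fintype (K i)] [∀ i, DecidableEq (K i)]

def marginalAt (μ : (∀ i, K i) → ℝ) (S : Finset Λ) (x : ∀ i, K i) : ℝ :=
  marginal K μ S (restrictW K S x)

variable (μ : (∀ i, K i) → ℝ)

theorem marginalAt_eq_sum (S : Finset Λ) (x : ∀ i, K i) :
    marginalAt μ S x = ∑ y, if ∀ i ∈ S, y i = x i then μ y else 0 := by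
  simp only [marginalAt, marginal, restrictW_eq_iff]

theorem marginalAt_congr {S : Finset Λ} {x y : ∀ i, K i} (h : ∀ i ∈ S, y i = x i) :
    marginalAt μ S y = marginalAt μ S x := by
  rw [marginalAt, restrictW_eq_iff.2 h, marginalAt]

theorem marginalAt_univ (x : ∀ i, K i) : marginalAt μ univ x = μ x := by
  simp [marginalAt_eq_sum, ← funext_iff]

theorem marginalAt_empty (x : ∀ i, K i) : marginalAt μ ∅ x = ∑ y, μ y := by
  simp [marginalAt_eq_sum]

theorem marginalAt_singleton (i : Λ) (x : ∀ i, K i) :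
    marginalAt μ {i} x = marg1 K μ i (x i) := by
  simp [marginalAt_eq_sum, marg1]

theorem sum_marginalAt_eq_marginalAt_sdiff {A T : Finset Λ} (hTA : T ⊆ A) (x : ∀ i, K i) :
    ∑ y, (if ∀ i ∉ T, y i = x i then marginalAt μ A y else 0) = marginalAt μ (A \ T) x := by
  simp only [marginalAt_eq_sum, ite_sum_zero, ← ite_and]
  rw [sum_comm]
  refine sum_congr rfl fun w _ => ?_
  by_cases hw : ∀ i ∈ A \ T, w i = x i
  · have hunique : ∀ y : ∀ i, K i, ((∀ i ∉ T, y i = x i) ∧ ∀ i ∈ A, w i = y i) ↔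
        y = fun i => if i ∈ T then w i else x i := by
      refine fun y => ⟨fun ⟨hx, hA⟩ => funext fun i => ?_, ?_⟩
      · split_ifs with hi
        exacts [(hA i (hTA hi)).symm, hx i hi]
      · rintro rfl
        refine ⟨fun i hi => if_neg hi, fun i hi => ?_⟩
        dsimp only
        split_ifs with hiT
        exacts [rfl, hw i (mem_sdiff.2 ⟨hi, hiT⟩)]
    simp only [hunique, sum_ite_eq', mem_univ, if_true, if_pos hw]
  · rw [if_neg hw]
    refine sum_eq_zero fun y _ => if_neg ?_
    rintro ⟨hx, hy⟩
    exact hw fun i hi => (hy i (mem_sdiff.1 hi).1).trans (hx i (mem_sdiff.1 hi).2)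

theorem marginalAt_sdiff_eq_mul {A M N T : Finset Λ} (hTA : T ⊆ A) (hTN : T ⊆ N)
    (hMT : Disjoint M T)
    (h : ∀ y, marginalAt μ A y = marginalAt μ M y * marginalAt μ N y) (x : ∀ i, K i) :
    marginalAt μ (A \ T) x = marginalAt μ M x * marginalAt μ (N \ T) x := by
  rw [← sum_marginalAt_eq_marginalAt_sdiff μ hTA, ← sum_marginalAt_eq_marginalAt_sdiff μ hTN,
    mul_sum]
  refine sum_congr rfl fun y _ => ?_
  split_ifs with hy
  · rw [h, marginalAt_congr μ fun i hi => hy i (disjoint_left.1 hMT hi)]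
  · rw [mul_zero]

def FactorsAlong (I : Finset Λ) : Prop :=
  ∀ x, μ x = marginalAt μ I x * marginalAt μ Iᶜ x

variable {μ}

theorem FactorsAlong.marginalAt_eq_mul {J : Finset Λ} (h : FactorsAlong μ J) (S : Finset Λ)
    (x : ∀ i, K i) :
    marginalAt μ S x = marginalAt μ (S ∩ J) x * marginalAt μ (S \ J) x := by
  -- Sum out `Jᶜ \ S`, seen only by the factor on `Jᶜ`, then `J \ S`, seen only by the one on `J`.
  have hJS : ∀ y, marginalAt μ (J ∪ S) y = marginalAt μ J y * marginalAt μ (S \ J) y := by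
    intro y
    have := marginalAt_sdiff_eq_mul μ (subset_univ (Jᶜ \ S)) sdiff_subset
      (disjoint_compl_right.mono_right sdiff_subset) (fun y => (marginalAt_univ μ y).trans (h y)) y
    rwa [show univ \ (Jᶜ \ S) = J ∪ S by ext; simp; tauto,
      show Jᶜ \ (Jᶜ \ S) = S \ J by ext; simp; tauto] at this
  have := marginalAt_sdiff_eq_mul μ (sdiff_subset.trans subset_union_left : J \ S ⊆ J ∪ S)
    sdiff_subset disjoint_sdiff_sdiff (fun y => (hJS y).trans (mul_comm _ _)) x
  rwa [show (J ∪ S) \ (J \ S) = S by ext; simp; tauto, sdiff_sdiff_right_self, inf_eq_inter,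
    inter_comm, mul_comm] at this

theorem FactorsAlong.compl {I : Finset Λ} (h : FactorsAlong μ I) : FactorsAlong μ Iᶜ := by
  intro x
  rw [compl_compl, mul_comm]
  exact h x

theorem FactorsAlong.inter {I J : Finset Λ} (hI : FactorsAlong μ I) (hJ : FactorsAlong μ J) :
    FactorsAlong μ (I ∩ J) := by
  intro x
  have hcompl : marginalAt μ (I ∩ J)ᶜ x = marginalAt μ (I \ J) x * marginalAt μ Iᶜ x := by
    rw [hI.marginalAt_eq_mul]
    congr 2 <;> ext <;> simp <;> tauto
  rw [hI x, hJ.marginalAt_eq_mul I, hcompl, mul_assoc]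

theorem factorsAlong_univ (htot : ∑ y, μ y = 1) : FactorsAlong μ (univ : Finset Λ) := by
  intro x
  rw [compl_univ, marginalAt_empty, htot, mul_one, marginalAt_univ]

def factorsAlongSubalgebra (htot : ∑ y, μ y = 1) : BooleanSubalgebra (Finset Λ) where
  carrier := {I | FactorsAlong μ I}
  supClosed' I hI J hJ := by
    simpa using ((FactorsAlong.compl hI).inter (FactorsAlong.compl hJ)).compl
  infClosed' _ hI _ hJ := FactorsAlong.inter hI hJ
  compl_mem' := FactorsAlong.compl
  bot_mem' := by simpa using (factorsAlong_univ htot).compl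

theorem marginalAt_eq_prod (htot : ∑ y, μ y = 1) (hsingleton : ∀ i, FactorsAlong μ {i})
    (s : Finset Λ) (x : ∀ i, K i) : marginalAt μ s x = ∏ i ∈ s, marginalAt μ {i} x := by
  induction s using Finset.induction_on with
  | empty => rw [marginalAt_empty, htot, prod_empty]
  | insert a s ha ih =>
    have hinter : insert a s ∩ {a} = {a} := by simp
    have hsdiff : insert a s \ {a} = s := by grind
    rw [(hsingleton a).marginalAt_eq_mul, hinter, hsdiff, ih, prod_insert ha]

end

theorem separated_eq_product_of_T0_general {Λ : Type*} [Fintype Λ] [DecidableEq Λ]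
    (K : Λ → Type*) [∀ i, Fintype (K i)] [∀ i, DecidableEq (K i)]
    (𝒥 : Finset (Finset Λ)) (hT0 : IsT0 𝒥)
    (ν : (∀ i, K i) → ℝ) (hν : IsPMF K ν)
    (hsep : IsSeparated K 𝒥 ν) :
    ∀ x, ν x = ∏ i, marg1 K ν i (x i) := by
  intro x
  have hsingleton : ∀ i, FactorsAlong ν {i} :=
    hT0.singleton_mem (L := factorsAlongSubalgebra hν.2) hsep
  rw [← marginalAt_univ ν x, marginalAt_eq_prod hν.2 hsingleton]
  exact prod_congr rfl fun i _ => marginalAt_singleton ν i x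

/-- if `𝒥` is a `T₀`-system, a `𝒥`-separated probability mass function is the
product of its one-dimensional marginals. -/
theorem separated_eq_product_of_T0 {Λ : Type*} [Fintype Λ] [DecidableEq Λ] [Nonempty Λ]
    (K : Λ → Type*) [∀ i, Fintype (K i)] [∀ i, DecidableEq (K i)] [∀ i, Nonempty (K i)]
    (𝒥 : Finset (Finset Λ)) (hT0 : IsT0 𝒥)
    (ν : (∀ i, K i) → ℝ) (hν : IsPMF K ν)
    (hsep : IsSeparated K 𝒥 ν) :
    ∀ x, ν x = ∏ i, marg1 K ν i (x i) :=
  separated_eq_product_of_T0_general K 𝒥 hT0 ν hν hsep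
end

section
/- Let Λ be a finite index set and let (ξ_i)_{i∈Λ} be random variables on a probability space, each ξ_i taking values in a measurable space. Suppose that for any two distinct indices i, j ∈ Λ there exists a subset I ⊆ Λ containing exactly one element of {i, j} such that the family ξ_I = (ξ_k)_{k∈I} is independent of the family ξ_{Λ∖I} = (ξ_k)_{k∈Λ∖I}. Then the random variables (ξ_i)_{i∈Λ} are mutually independent. -/
/-!
Induction on the number of indices. A splitting `I, Iᶜ` separating two indices has both parts
nonempty, and the splitting hypothesis passes to each part, since restricting a splitting only
shrinks its two σ-algebras. So each part is mutually independent by induction, and the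
independence of the two parts glues the two product formulas into one.
-/

open MeasureTheory ProbabilityTheory

namespace ProbabilityTheory

variable {Ω ι : Type*} {mΩ : MeasurableSpace Ω} {μ : Measure Ω} {m : ι → MeasurableSpace Ω}

def HasT0IndepSplittings (m : ι → MeasurableSpace Ω) (μ : Measure Ω) : Prop :=
  ∀ i j, i ≠ j → ∃ I : Set ι, Xor (i ∈ I) (j ∈ I) ∧ Indep (⨆ k ∈ I, m k) (⨆ k ∈ Iᶜ, m k) μ

lemma measurableSet_biInter_subtype {p : ι → Prop} (S : Finset {k // p k}) {f : ι → Set Ω}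
    (hf : ∀ k ∈ S, MeasurableSet[m k] (f k)) :
    MeasurableSet[⨆ k, ⨆ (_ : p k), m k] (⋂ k ∈ S, f k) :=
  Finset.measurableSet_biInter S fun k hk =>
    le_iSup₂ (f := fun k (_ : p k) => m k) k.1 k.2 _ (hf k hk)

lemma iIndep_of_indep_iSup_compl {I : Set ι}
    (hI : iIndep (fun k : I => m k) μ) (hIc : iIndep (fun k : ↥Iᶜ => m k) μ)
    (h : Indep (⨆ k ∈ I, m k) (⨆ k ∈ Iᶜ, m k) μ) : iIndep m μ := by
  classical
  refine (iIndep_iff _ _).2 fun S f hf => ?_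
  have hf_sub : ∀ (p : ι → Prop) [DecidablePred p], ∀ k ∈ S.subtype p, MeasurableSet[m k] (f k) :=
    fun p _ k hk => hf k (Finset.mem_subtype.1 hk)
  calc μ (⋂ k ∈ S, f k)
      = μ ((⋂ k ∈ S.subtype (· ∈ I), f k) ∩ ⋂ k ∈ S.subtype (· ∈ Iᶜ), f k) := by
        congr 1; ext
        simp only [Set.mem_iInter, Finset.mem_subtype, Set.iInter_coe_set, Set.mem_compl_iff,
          Set.mem_inter_iff]
        grind
    _ = μ (⋂ k ∈ S.subtype (· ∈ I), f k) * μ (⋂ k ∈ S.subtype (· ∈ Iᶜ), f k) :=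
        (Indep_iff _ _ _).1 h _ _ (measurableSet_biInter_subtype _ (hf_sub _))
          (measurableSet_biInter_subtype _ (hf_sub _))
    _ = ∏ k ∈ S, μ (f k) := by
        rw [hI.meas_biInter (hf_sub _), hIc.meas_biInter (hf_sub _),
          Finset.prod_subtype_eq_prod_filter (fun k => μ (f k)),
          Finset.prod_subtype_eq_prod_filter (fun k => μ (f k))]
        exact Finset.prod_filter_mul_prod_filter_not S (· ∈ I) _

lemma HasT0IndepSplittings.restrict (h : HasT0IndepSplittings m μ) (s : Set ι) :
    HasT0IndepSplittings (fun k : s => m k) μ := by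
  intro i j hij
  obtain ⟨I, hsep, hI⟩ := h i j (Subtype.coe_injective.ne hij)
  refine ⟨Subtype.val ⁻¹' I, hsep, ?_⟩
  refine indep_of_indep_of_le_right (indep_of_indep_of_le_left hI ?_) ?_
  · exact iSup₂_le fun k hk => le_iSup₂ (f := fun k (_ : k ∈ I) => m k) k.1 hk
  · exact iSup₂_le fun k hk => le_iSup₂ (f := fun k (_ : k ∈ Iᶜ) => m k) k.1 hk

theorem HasT0IndepSplittings.iIndep [Finite ι] [IsProbabilityMeasure μ]
    (h : HasT0IndepSplittings m μ) : iIndep m μ := by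
  induction hn : Nat.card ι using Nat.strong_induction_on generalizing ι with
  | _ n ih =>
  rcases subsingleton_or_nontrivial ι with hι | ⟨i, j, hij⟩
  · exact iIndep.of_subsingleton
  obtain ⟨I, hsep, hI⟩ := h i j hij
  obtain ⟨x, hxI, y, hyI⟩ : ∃ x ∈ I, ∃ y, y ∉ I := by
    rcases hsep with ⟨hi, hj⟩ | ⟨hj, hi⟩
    exacts [⟨i, hi, j, hj⟩, ⟨j, hj, i, hi⟩]
  refine iIndep_of_indep_iSup_compl ?_ ?_ hI
  · exact ih _ (hn ▸ Finite.card_subtype_lt hyI) (h.restrict I) rfl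
  · exact ih _ (hn ▸ Finite.card_subtype_lt (not_not_intro hxI)) (h.restrict Iᶜ) rfl

end ProbabilityTheory

/-- if for any two distinct indices `i, j` there is a subset `I` of the index set
containing exactly one of `i, j` such that the family `(ξ k)_{k ∈ I}` is independent of the
family `(ξ k)_{k ∉ I}`, then the random variables `(ξ i)` are mutually independent. -/
theorem indep_of_T0_splittings {Ω : Type*} [MeasureSpace Ω]
    [IsProbabilityMeasure (ℙ : Measure Ω)]
    {Λ : Type*} [Fintype Λ]
    {E : Λ → Type*} [∀ i, MeasurableSpace (E i)]
    (ξ : ∀ i, Ω → E i)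
    (h : ∀ i j : Λ, i ≠ j → ∃ I : Set Λ,
      ((i ∈ I ∧ j ∉ I) ∨ (j ∈ I ∧ i ∉ I)) ∧
      IndepFun (fun ω => (fun k : I => ξ k ω)) (fun ω => (fun k : ↥Iᶜ => ξ k ω)) ℙ) :
    iIndepFun ξ ℙ := by
  refine (iIndepFun_iff_iIndep _ _ _).2 (HasT0IndepSplittings.iIndep fun i j hij => ?_)
  obtain ⟨I, hsep, hI⟩ := h i j hij
  refine ⟨I, hsep, ?_⟩
  rwa [IndepFun_iff_Indep, MeasurableSpace.comap_process_pi, MeasurableSpace.comap_process_pi,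
    iSup_subtype, iSup_subtype] at hI
end

section
/- Let (ξ_{i,j})_{(i,j)∈ A×B} be a random matrix indexed by finite sets A and B, with each entry taking values in a measurable space. If the columns (ξ_{·,j})_{j∈B} are mutually independent (as random vectors) and the rows (ξ_{i,·})_{i∈A} are mutually independent (as random vectors), then all entries ξ_{i,j}, (i,j) ∈ A×B, are mutually independent. -/
open MeasureTheory ProbabilityTheory

/-! The event `⋂_{(i,j) ∈ S} {ξ_{i,j} ∈ s_{i,j}}` is the intersection over the columns `j` met by
`S` of one event of column `j`. Independence of the columns factors its probability over `j`, and
independence of the entries of each column (which are functions of the independent rows) factors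
each column factor over the rows. -/

namespace ProbabilityTheory

variable {Ω ι κ : Type*} {_ : MeasurableSpace Ω} {μ : Measure Ω}
  {E : ι → κ → Type*} [∀ i j, MeasurableSpace (E i j)] {ξ : ∀ i j, Ω → E i j}

/-- Mathlib's `iIndepFun_uncurry'` asks the entries to be measurable, which is not assumed here. -/
theorem iIndepFun.uncurry (hcol : iIndepFun (fun j ω i => ξ i j ω) μ)
    (hentry : ∀ j, iIndepFun (fun i => ξ i j) μ) :
    iIndepFun (fun p : ι × κ => ξ p.1 p.2) μ := by
  classical
  rw [iIndepFun_iff_measure_inter_preimage_eq_mul]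
  intro S s hs
  let fiber (j : κ) : Finset ι := S.preimage (·, j) (Prod.mk_left_injective j).injOn
  have hfiber {i j} : i ∈ fiber j ↔ (i, j) ∈ S := Finset.mem_preimage
  have hS : ∀ p : ι × κ, p ∈ S ↔ p.2 ∈ S.image Prod.snd ∧ p.1 ∈ fiber p.2 := fun p => by
    simpa [hfiber] using fun hp => ⟨p.1, hp⟩
  let U (j : κ) : Set (∀ i, E i j) := ⋂ i ∈ fiber j, Function.eval i ⁻¹' s (i, j)
  have hU : ∀ j, MeasurableSet (U j) := fun j =>
    .biInter (fiber j).countable_toSet fun i hi =>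
      measurable_pi_apply i (hs (i, j) (hfiber.mp hi))
  have hinter : ⋂ p ∈ S, ξ p.1 p.2 ⁻¹' s p
      = ⋂ j ∈ S.image Prod.snd, (fun ω i => ξ i j ω) ⁻¹' U j := by
    ext ω
    simp only [Set.mem_iInter, Set.mem_preimage, U, Function.eval, hS]
    exact ⟨fun h j hj i hi => h (i, j) ⟨hj, hi⟩, fun h p hp => h p.2 hp.1 p.1 hp.2⟩
  have hcolumn : ∀ j, μ ((fun ω i => ξ i j ω) ⁻¹' U j)
      = ∏ i ∈ fiber j, μ (ξ i j ⁻¹' s (i, j)) := fun j => by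
    simp only [U, Set.preimage_iInter₂]
    exact (hentry j).measure_inter_preimage_eq_mul (fiber j)
      fun i hi => hs (i, j) (hfiber.mp hi)
  rw [hinter, hcol.measure_inter_preimage_eq_mul _ fun j _ => hU j,
    Finset.prod_finset_product_right S _ fiber hS]
  exact Finset.prod_congr rfl fun j _ => hcolumn j

end ProbabilityTheory

theorem indep_entries_of_indep_rows_cols_general {Ω : Type*} [MeasureSpace Ω]
    {A B : Type*}
    {E : A → B → Type*} [∀ i j, MeasurableSpace (E i j)]
    (ξ : ∀ i j, Ω → E i j)
    (hcol : iIndepFun (fun j ω => (fun i => ξ i j ω)) ℙ)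
    (hrow : iIndepFun (fun i ω => (fun j => ξ i j ω)) ℙ) :
    iIndepFun (fun (p : A × B) ω => ξ p.1 p.2 ω) ℙ :=
  hcol.uncurry fun j => hrow.comp (fun _ x => x j) fun _ => measurable_pi_apply j

/-- if the columns of a random matrix are mutually independent and its rows are
mutually independent, then all entries are mutually independent. -/
theorem indep_entries_of_indep_rows_cols {Ω : Type*} [MeasureSpace Ω]
    [IsProbabilityMeasure (ℙ : Measure Ω)]
    {A B : Type*} [Fintype A] [Fintype B]
    {E : A → B → Type*} [∀ i j, MeasurableSpace (E i j)]
    (ξ : ∀ i j, Ω → E i j)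
    (hcol : iIndepFun (fun j ω => (fun i => ξ i j ω)) ℙ)
    (hrow : iIndepFun (fun i ω => (fun j => ξ i j ω)) ℙ) :
    iIndepFun (fun (p : A × B) ω => ξ p.1 p.2 ω) ℙ :=
  indep_entries_of_indep_rows_cols_general ξ hcol hrow
end

section
/- Suppose 𝒥 is a T₀-system of frames on Λ. Let 𝒴 = {x^1, …, x^m} ⊆ X be a finite set of words such that for every coordinate i ∈ Λ the letters {x_i^1, …, x_i^m} exhaust all of K_i. Then every word x ∈ X can be obtained from words of 𝒴 by a finite sequence of recombinations with frames from 𝒥; that is, x belongs to the smallest subset of X that contains 𝒴 and is closed under the operation taking two of its elements x, y and a frame I ∈ 𝒥 to the word (x_{Λ∖I}, y_I) equal to y on I and to x off I. -/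
open Finset

section RecombAux

variable {Λ : Type*} [DecidableEq Λ] {K : Λ → Type*}

/-- A frame `T` is "good" for `S` if `S` is closed under `T`-recombinations. -/
def GoodSet (S : Set (∀ i, K i)) (T : Finset Λ) : Prop :=
  ∀ u ∈ S, ∀ v ∈ S, (fun i => if i ∈ T then v i else u i) ∈ S

lemma recombW_eq_ite (T : Finset Λ) (u v : ∀ i, K i) :
    recombW K T u (restrictW K T v) = fun i => if i ∈ T then v i else u i := by
  funext i
  simp [recombW, restrictW]

lemma goodSet_sdiff {S : Set (∀ i, K i)} {T T' : Finset Λ}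
    (hT : GoodSet S T) (hT' : GoodSet S T') : GoodSet S (T \ T') := by
  intro u hu v hv
  have hz := hT u hu v hv
  have h2 := hT' _ hz u hu
  have heq : (fun i => if i ∈ T \ T' then v i else u i)
      = (fun i => if i ∈ T' then u i else if i ∈ T then v i else u i) := by
    funext i
    by_cases h1 : i ∈ T' <;> by_cases h2 : i ∈ T <;> simp [h1, h2]
  rw [heq]
  exact h2

lemma goodSet_inter {S : Set (∀ i, K i)} {T T' : Finset Λ}
    (hT : GoodSet S T) (hT' : GoodSet S T') : GoodSet S (T ∩ T') := by
  have := goodSet_sdiff hT (goodSet_sdiff hT hT')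
  rwa [Finset.sdiff_sdiff_self_left] at this

lemma goodSet_shrink {S : Set (∀ i, K i)} (i : Λ) :
    ∀ 𝒢 : Finset (Finset Λ), (∀ I ∈ 𝒢, GoodSet S I) → ∀ T : Finset Λ, GoodSet S T →
      ∃ T' : Finset Λ, GoodSet S T' ∧
        ∀ j, (j ∈ T' ↔ j ∈ T ∧ ∀ I ∈ 𝒢, ((i ∈ I → j ∈ I) ∧ (i ∉ I → j ∉ I))) := by
  intro 𝒢
  induction 𝒢 using Finset.induction_on with
  | empty => intro _ T hT; exact ⟨T, hT, by simp⟩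
  | @insert I 𝒢 hI ih =>
    intro hG T hT
    obtain ⟨T', hT', hmem⟩ := ih (fun J hJ => hG J (Finset.mem_insert_of_mem hJ)) T hT
    have hGI : GoodSet S I := hG I (Finset.mem_insert_self I 𝒢)
    by_cases hi : i ∈ I
    · refine ⟨T' ∩ I, goodSet_inter hT' hGI, fun j => ?_⟩
      simp only [Finset.mem_inter, hmem, Finset.mem_insert]
      constructor
      · rintro ⟨⟨hjT, hall⟩, hjI⟩
        refine ⟨hjT, fun J hJ => ?_⟩
        rcases hJ with rfl | hJ
        · exact ⟨fun _ => hjI, fun h => absurd hi h⟩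
        · exact hall J hJ
      · rintro ⟨hjT, hall⟩
        exact ⟨⟨hjT, fun J hJ => hall J (Or.inr hJ)⟩, (hall I (Or.inl rfl)).1 hi⟩
    · refine ⟨T' \ I, goodSet_sdiff hT' hGI, fun j => ?_⟩
      simp only [Finset.mem_sdiff, hmem, Finset.mem_insert]
      constructor
      · rintro ⟨⟨hjT, hall⟩, hjI⟩
        refine ⟨hjT, fun J hJ => ?_⟩
        rcases hJ with rfl | hJ
        · exact ⟨fun h => absurd h hi, fun _ => hjI⟩
        · exact hall J hJ
      · rintro ⟨hjT, hall⟩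
        exact ⟨⟨hjT, fun J hJ => hall J (Or.inr hJ)⟩, (hall I (Or.inl rfl)).2 hi⟩

end RecombAux

/-- if `𝒥` is a `T₀`-system and `𝒴` is a set of words whose letters at each
coordinate exhaust the whole alphabet at that coordinate, then every word belongs to the
smallest set containing `𝒴` and closed under `I`-recombinations with frames `I ∈ 𝒥`. -/
theorem mem_recombination_closure {Λ : Type*} [Fintype Λ] [DecidableEq Λ] [Nonempty Λ]
    (K : Λ → Type*) [∀ i, Fintype (K i)] [∀ i, DecidableEq (K i)] [∀ i, Nonempty (K i)]
    (𝒥 : Finset (Finset Λ)) (hT0 : IsT0 𝒥)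
    (𝒴 : Finset (∀ i, K i))
    (hfull : ∀ i : Λ, ∀ a : K i, ∃ w ∈ 𝒴, w i = a)
    (x : ∀ i, K i) :
    ∀ S : Set (∀ i, K i), (↑𝒴 ⊆ S) →
      (∀ u ∈ S, ∀ v ∈ S, ∀ I ∈ 𝒥, recombW K I u (restrictW K I v) ∈ S) →
      x ∈ S := by
  intro S hYS hclosed
  -- every frame in `𝒥` is good
  have hgood : ∀ I ∈ 𝒥, GoodSet S I := by
    intro I hI u hu v hv
    have := hclosed u hu v hv I hI
    rwa [recombW_eq_ite] at this
  -- singletons at covered coordinates are good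
  have hsingle : ∀ i : Λ, (∃ I ∈ 𝒥, i ∈ I) → GoodSet S {i} := by
    rintro i ⟨I₀, hI₀, hiI₀⟩
    obtain ⟨T', hT', hmem⟩ := goodSet_shrink i 𝒥 hgood I₀ (hgood I₀ hI₀)
    have hTi : T' = {i} := by
      ext j
      simp only [Finset.mem_singleton, hmem]
      constructor
      · rintro ⟨hjI₀, hall⟩
        by_contra hne
        obtain ⟨I, hI, h⟩ := hT0 i j (fun h => hne h.symm)
        rcases h with ⟨hiI, hjI⟩ | ⟨hjI, hiI⟩
        · exact hjI ((hall I hI).1 hiI)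
        · exact ((hall I hI).2 hiI) hjI
      · rintro rfl
        exact ⟨hiI₀, fun I hI => ⟨id, id⟩⟩
    rw [hTi] at hT'
    exact hT'
  set Cov : Finset Λ := 𝒥.sup id with hCov
  have hCovmem : ∀ i, i ∈ Cov ↔ ∃ I ∈ 𝒥, i ∈ I := by
    intro i; simp [hCov, Finset.mem_sup]
  -- main induction: we can overwrite any covered set of coordinates with those of `x`
  have hmain : ∀ M : Finset Λ, M ⊆ Cov → ∀ w ∈ S,
      (fun i => if i ∈ M then x i else w i) ∈ S := by
    intro M
    induction M using Finset.induction_on with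
    | empty => intro _ w hw; simpa using hw
    | @insert a M ha ih =>
      intro hsub w hw
      have hz := ih ((Finset.subset_insert a M).trans hsub) w hw
      obtain ⟨v, hv, hva⟩ := hfull a (x a)
      have hga : GoodSet S {a} :=
        hsingle a ((hCovmem a).1 (hsub (Finset.mem_insert_self a M)))
      have h2 := hga _ hz v (hYS hv)
      have heq : (fun i => if i ∈ ({a} : Finset Λ) then v i else if i ∈ M then x i else w i)
          = (fun i => if i ∈ insert a M then x i else w i) := by
        funext i
        by_cases h1 : i = a
        · subst h1; simp [hva]
        · simp [h1, Finset.mem_insert]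
      rw [heq] at h2
      exact h2
  by_cases hall : ∀ j : Λ, j ∈ Cov
  · obtain ⟨i0⟩ := (inferInstance : Nonempty Λ)
    obtain ⟨w, hw, -⟩ := hfull i0 (x i0)
    have := hmain Finset.univ (fun j _ => hall j) w (hYS hw)
    simpa using this
  · push_neg at hall
    obtain ⟨j0, hj0⟩ := hall
    obtain ⟨w, hw, hwj⟩ := hfull j0 (x j0)
    have hm := hmain Cov (Finset.Subset.refl _) w (hYS hw)
    have heq : (fun i => if i ∈ Cov then x i else w i) = x := by
      funext i
      by_cases hi : i ∈ Cov
      · simp [hi]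
      · simp only [hi, if_false]
        by_cases hij : i = j0
        · subst hij; exact hwj
        · exfalso
          obtain ⟨I, hI, h⟩ := hT0 i j0 hij
          rcases h with ⟨hiI, -⟩ | ⟨hjI, -⟩
          · exact hi ((hCovmem i).2 ⟨I, hI, hiI⟩)
          · exact hj0 ((hCovmem j0).2 ⟨I, hI, hjI⟩)
    rw [heq] at hm
    exact hm
end

section
/- Let S be a nonempty finite set, μ a strictly positive probability mass function on S, and φ : S × S → ℝ a symmetric strictly positive function; define transition rates q(x, y) = φ(x, y) μ(y). Let t ↦ p^t be a solution of the Kolmogorov forward equation dp^t(x)/dt = Σ_{y∈S} ( q(y, x) p^t(y) − q(x, y) p^t(x) ) such that p^t is a strictly positive probability mass function on S for each t. Then the Kullback–Leibler divergence D(p^t ‖ μ) = Σ_{x∈S} p^t(x) ln( p^t(x)/μ(x) ) has derivative ≤ 0 at every t, and the derivative is strictly negative at any t with p^t ≠ μ. In particular μ is a fixed point of this equation. -/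
/-!
Write `r = p^t / μ` and `w(x, y) = φ(x, y) μ(x) μ(y)`, a symmetric positive weight. Since
`q(x, y) = φ(x, y) μ(y)`, the forward equation reads `dp(x)/dt = ∑_y w(x, y) (r(y) - r(x))`, and
`dD/dt = ∑_x dp(x)/dt · (log r(x) + 1)`. Summing by parts against the symmetric weight turns this
into `-½ ∑_{x,y} w(x, y) (r(y) - r(x)) (log r(y) - log r(x))`, which is `≤ 0` because `log` is
increasing, and `< 0` as soon as `r` is not constant, i.e. as soon as `p^t ≠ μ`.
-/

open Finset Real

section

variable {S : Type*} [Fintype S]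

noncomputable def dirichletForm (w : S → S → ℝ) (f g : S → ℝ) : ℝ :=
  (∑ x, ∑ y, w x y * (f y - f x) * (g y - g x)) / 2

theorem dirichletForm_add_const (w : S → S → ℝ) (f g : S → ℝ) (c : ℝ) :
    dirichletForm w f (fun x => g x + c) = dirichletForm w f g := by
  simp only [dirichletForm, add_sub_add_right_eq_sub]

theorem sum_mul_eq_neg_dirichletForm {w : S → S → ℝ} (hw : ∀ x y, w x y = w y x)
    (f g : S → ℝ) :
    ∑ x, (∑ y, w x y * (f y - f x)) * g x = -dirichletForm w f g := by
  have hswap : ∑ x, (∑ y, w x y * (f y - f x)) * g x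
      = ∑ x, ∑ y, w x y * (f x - f y) * g y := by
    simp only [sum_mul]
    rw [sum_comm]
    exact sum_congr rfl fun x _ => sum_congr rfl fun y _ => by rw [hw y x]
  have htwice : ∑ x, (∑ y, w x y * (f y - f x)) * g x
      + ∑ x, ∑ y, w x y * (f x - f y) * g y
      = -∑ x, ∑ y, w x y * (f y - f x) * (g y - g x) := by
    simp only [sum_mul, ← sum_add_distrib, ← sum_neg_distrib]
    exact sum_congr rfl fun x _ => sum_congr rfl fun y _ => by ring
  rw [dirichletForm]
  linarith

theorem sub_mul_log_sub_log_nonneg {a b : ℝ} (ha : 0 < a) (hb : 0 < b) :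
    0 ≤ (b - a) * (log b - log a) := by
  rcases le_total a b with hab | hba
  · exact mul_nonneg (sub_nonneg.2 hab) (sub_nonneg.2 (log_le_log ha hab))
  · exact mul_nonneg_of_nonpos_of_nonpos (sub_nonpos.2 hba) (sub_nonpos.2 (log_le_log hb hba))

theorem sub_mul_log_sub_log_pos {a b : ℝ} (ha : 0 < a) (hb : 0 < b) (hab : a ≠ b) :
    0 < (b - a) * (log b - log a) := by
  rcases hab.lt_or_gt with hab | hba
  · exact mul_pos (sub_pos.2 hab) (sub_pos.2 (log_lt_log ha hab))
  · exact mul_pos_of_neg_of_neg (sub_neg.2 hba) (sub_neg.2 (log_lt_log hb hba))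

theorem dirichletForm_log_nonneg {w : S → S → ℝ} (hw : ∀ x y, 0 ≤ w x y) {f : S → ℝ}
    (hf : ∀ x, 0 < f x) : 0 ≤ dirichletForm w f (fun x => log (f x)) := by
  refine div_nonneg (sum_nonneg fun x _ => sum_nonneg fun y _ => ?_) zero_le_two
  rw [mul_assoc]
  exact mul_nonneg (hw x y) (sub_mul_log_sub_log_nonneg (hf x) (hf y))

theorem dirichletForm_log_pos {w : S → S → ℝ} (hw : ∀ x y, 0 < w x y) {f : S → ℝ}
    (hf : ∀ x, 0 < f x) {a b : S} (hab : f a ≠ f b) :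
    0 < dirichletForm w f (fun x => log (f x)) := by
  have hterm : ∀ x y, 0 ≤ w x y * (f y - f x) * (log (f y) - log (f x)) := fun x y => by
    rw [mul_assoc]
    exact mul_nonneg (hw x y).le (sub_mul_log_sub_log_nonneg (hf x) (hf y))
  refine div_pos (sum_pos' (fun x _ => sum_nonneg fun y _ => hterm x y)
    ⟨a, mem_univ a, sum_pos' (fun y _ => hterm a y) ⟨b, mem_univ b, ?_⟩⟩) two_pos
  rw [mul_assoc]
  exact mul_pos (hw a b) (sub_mul_log_sub_log_pos (hf a) (hf b) hab)

theorem hasDerivAt_sum_mul_log_div {p : ℝ → S → ℝ} {p' μ : S → ℝ} {t : ℝ}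
    (hp : ∀ x, HasDerivAt (fun s => p s x) (p' x) t) (hpt : ∀ x, p t x ≠ 0)
    (hμ : ∀ x, μ x ≠ 0) :
    HasDerivAt (fun s => ∑ x, p s x * log (p s x / μ x))
      (∑ x, p' x * (log (p t x / μ x) + 1)) t := by
  refine HasDerivAt.fun_sum fun x _ => ?_
  refine ((hp x).fun_mul (((hp x).div_const (μ x)).log (div_ne_zero (hpt x) (hμ x)))).congr_deriv ?_
  field_simp [hpt x, hμ x]

theorem forwardRate_eq_sum_mul_sub_div {φ : S → S → ℝ} (hφ : ∀ x y, φ x y = φ y x)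
    {μ : S → ℝ} (hμ : ∀ x, μ x ≠ 0) (p : S → ℝ) (x : S) :
    ∑ y, (φ y x * μ x * p y - φ x y * μ y * p x)
      = ∑ y, φ x y * μ x * μ y * (p y / μ y - p x / μ x) := by
  refine sum_congr rfl fun y _ => ?_
  rw [hφ y x]
  field_simp [hμ x, hμ y]

theorem exists_div_ne_div_of_sum_eq {p μ : S → ℝ} (hμ : ∀ x, μ x ≠ 0)
    (hsum : ∑ x, p x = ∑ x, μ x) (hsum0 : ∑ x, μ x ≠ 0) (hne : p ≠ μ) :
    ∃ a b, p a / μ a ≠ p b / μ b := by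
  obtain ⟨a, ha⟩ := Function.ne_iff.1 hne
  refine ⟨a, ?_⟩
  by_contra! hconst
  have hp : ∀ x, p x = p a / μ a * μ x := fun x => by
    rw [hconst x, div_mul_cancel₀ _ (hμ x)]
  have hratio : p a / μ a = 1 := by
    rw [sum_congr rfl fun x _ => hp x, ← mul_sum] at hsum
    exact (mul_eq_right₀ hsum0).1 hsum
  exact ha (by rw [hp a, hratio, one_mul])

end

theorem KL_decreasing_general {S : Type*} [Fintype S]
    (μ : S → ℝ) (hμpos : ∀ x, 0 < μ x) (hμsum : ∑ x, μ x = 1)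
    (φ : S → S → ℝ) (hφpos : ∀ x y, 0 < φ x y) (hφsymm : ∀ x y, φ x y = φ y x)
    (p : ℝ → S → ℝ)
    (hsol : ∀ x t, HasDerivAt (fun s => p s x)
      (∑ y, (φ y x * μ x * p t y - φ x y * μ y * p t x)) t)
    (hppos : ∀ t x, 0 < p t x) (hpsum : ∀ t, ∑ x, p t x = 1) :
    (∀ t, ∃ d : ℝ, d ≤ 0 ∧
        HasDerivAt (fun s => ∑ x, p s x * Real.log (p s x / μ x)) d t ∧
        (p t ≠ μ → d < 0)) ∧
      ∀ x, ∑ y, (φ y x * μ x * μ y - φ x y * μ y * μ x) = 0 := by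
  refine ⟨fun t => ?_, fun x => sum_eq_zero fun y _ => by rw [hφsymm y x]; ring⟩
  have hμ : ∀ x, μ x ≠ 0 := fun x => (hμpos x).ne'
  set r : S → ℝ := fun x => p t x / μ x
  set w : S → S → ℝ := fun x y => φ x y * μ x * μ y
  have hr : ∀ x, 0 < r x := fun x => div_pos (hppos t x) (hμpos x)
  have hw : ∀ x y, 0 < w x y := fun x y => mul_pos (mul_pos (hφpos x y) (hμpos x)) (hμpos y)
  have hderiv := hasDerivAt_sum_mul_log_div (fun x => hsol x t) (fun x => (hppos t x).ne') hμ
  simp only [forwardRate_eq_sum_mul_sub_div hφsymm hμ] at hderiv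
  rw [sum_mul_eq_neg_dirichletForm (fun x y => by simp only [hφsymm x y]; ring),
    dirichletForm_add_const] at hderiv
  refine ⟨_, neg_nonpos.2 (dirichletForm_log_nonneg (fun x y => (hw x y).le) hr), hderiv,
    fun hne => neg_neg_iff_pos.2 ?_⟩
  obtain ⟨a, b, hab⟩ := exists_div_ne_div_of_sum_eq hμ ((hpsum t).trans hμsum.symm)
    (hμsum ▸ one_ne_zero) hne
  exact dirichletForm_log_pos hw hr hab

/-- for the Markov process on a finite set `S` with transition rates
`q(x,y) = φ(x,y) μ(y)` (`φ` symmetric and strictly positive, `μ` a strictly positive pmf),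
the Kullback–Leibler divergence `D(p^t ‖ μ)` is nonincreasing along any strictly positive
pmf-valued solution of the forward Kolmogorov equation, with strictly negative derivative
whenever `p^t ≠ μ`; in particular `μ` is a fixed point. -/
theorem KL_decreasing {S : Type*} [Fintype S] [Nonempty S]
    (μ : S → ℝ) (hμpos : ∀ x, 0 < μ x) (hμsum : ∑ x, μ x = 1)
    (φ : S → S → ℝ) (hφpos : ∀ x y, 0 < φ x y) (hφsymm : ∀ x y, φ x y = φ y x)
    (p : ℝ → S → ℝ)
    (hsol : ∀ x t, HasDerivAt (fun s => p s x)
      (∑ y, (φ y x * μ x * p t y - φ x y * μ y * p t x)) t)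
    (hppos : ∀ t x, 0 < p t x) (hpsum : ∀ t, ∑ x, p t x = 1) :
    (∀ t, ∃ d : ℝ, d ≤ 0 ∧
        HasDerivAt (fun s => ∑ x, p s x * Real.log (p s x / μ x)) d t ∧
        (p t ≠ μ → d < 0)) ∧
      ∀ x, ∑ y, (φ y x * μ x * μ y - φ x y * μ y * μ x) = 0 :=
  KL_decreasing_general μ hμpos hμsum φ hφpos hφsymm p hsol hppos hpsum
end
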